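/- arXiv:1609.08828 — 2 statements merged into one kernel-verified Lean document; each statement's English description precedes it below -/
import Mathlib

section
/- Let ℝ^{2,1} denote ℝ³ with the Lorentzian symmetric bilinear form ⟨x,y⟩ = x_1y_1 + x_2y_2 − x_3y_3. Let B be a real skew-symmetric 3×3 matrix which is cyclic with b_12, b_23, b_31 > 0 and b_12, b_23, b_31 ≥ 2, and let v_1, v_2, v_3 ∈ ℝ^{2,1} satisfy (1) ⟨v_i,v_i⟩ = −2 for i = 1,2,3 and (2) ⟨v_i,v_j⟩ = −|b_ij| for 1 ≤ i < j ≤ 3. Fix k ∈ {1,2,3} and define v'_j = −v_j − ⟨v_j,v_k⟩v_k if b_jk > 0 and v'_j = v_j otherwise. Then B' = μ_k(B) is again cyclic with |b'_12|, |b'_23|, |b'_31| ≥ 2, and the triple (v'_1, v'_2, v'_3) satisfies conditions (1)–(2) with respect to B'. -/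
open Matrix
noncomputable section

/-- Mutation of a real `3 × 3` matrix in direction `k`. -/
def mutate (k : Fin 3) (B : Matrix (Fin 3) (Fin 3) ℝ) : Matrix (Fin 3) (Fin 3) ℝ :=
  Matrix.of fun i j =>
    if i = k ∨ j = k then -B i j
    else B i j + (|B i k| * B k j + B i k * |B k j|) / 2

/-- One step of mutation equivalence: a single mutation, or a simultaneous
permutation of the index set. -/
def MutationStep (B B' : Matrix (Fin 3) (Fin 3) ℝ) : Prop :=
  (∃ k : Fin 3, B' = mutate k B) ∨
  (∃ σ : Equiv.Perm (Fin 3), B' = Matrix.of fun i j => B (σ i) (σ j))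

/-- Mutation equivalence: a finite sequence of mutations and simultaneous permutations. -/
def MutationEquiv : Matrix (Fin 3) (Fin 3) ℝ → Matrix (Fin 3) (Fin 3) ℝ → Prop :=
  Relation.ReflTransGen MutationStep

/-- `B` is cyclic if `b₁₂, b₂₃, b₃₁` are all nonzero and of the same sign. -/
def IsCyclicMat (B : Matrix (Fin 3) (Fin 3) ℝ) : Prop :=
  (0 < B 0 1 ∧ 0 < B 1 2 ∧ 0 < B 2 0) ∨ (B 0 1 < 0 ∧ B 1 2 < 0 ∧ B 2 0 < 0)

instance : DecidablePred IsCyclicMat := fun B => by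
  unfold IsCyclicMat; exact inferInstance

/-- `B` is mutation-cyclic if every matrix in its mutation class is cyclic. -/
def IsMutationCyclic (B : Matrix (Fin 3) (Fin 3) ℝ) : Prop :=
  ∀ B', MutationEquiv B B' → IsCyclicMat B'

/-- `B` is mutation-acyclic if some matrix in its mutation class is acyclic. -/
def IsMutationAcyclic (B : Matrix (Fin 3) (Fin 3) ℝ) : Prop :=
  ∃ B', MutationEquiv B B' ∧ ¬ IsCyclicMat B'

/-- The Markov constant `C(B)`. -/
def markov (B : Matrix (Fin 3) (Fin 3) ℝ) : ℝ :=
  (B 0 1) ^ 2 + (B 1 2) ^ 2 + (B 2 0) ^ 2 -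
    (if IsCyclicMat B then 1 else -1) * |B 0 1 * B 1 2 * B 2 0|

/-- The Lorentzian symmetric bilinear form on `ℝ^{2,1}`. -/
def lform (x y : Fin 3 → ℝ) : ℝ := x 0 * y 0 + x 1 * y 1 - x 2 * y 2

/-- A realization of `B` by reflections: a triple of vectors of square norm `2`
whose pairwise inner products have the absolute values `|b_ij|`, with the parity
condition on the number of positive inner products. -/
def ReflRealization {V : Type*} [AddCommGroup V] [Module ℝ V]
    (f : V →ₗ[ℝ] V →ₗ[ℝ] ℝ) (B : Matrix (Fin 3) (Fin 3) ℝ) (v : Fin 3 → V) : Prop :=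
  (∀ i, f (v i) (v i) = 2) ∧
  (∀ i j, i ≠ j → |f (v i) (v j)| = |B i j|) ∧
  ((∀ i j, i ≠ j → f (v i) (v j) ≠ 0) →
    (Finset.univ.filter
        (fun p : Fin 3 × Fin 3 => p.1 < p.2 ∧ 0 < f (v p.1) (v p.2))).card % 2
      = if IsCyclicMat B then 1 else 0)

/-- Mutation of a triple of vectors by partial reflections. -/
def mutateVecRefl {V : Type*} [AddCommGroup V] [Module ℝ V]
    (f : V →ₗ[ℝ] V →ₗ[ℝ] ℝ) (B : Matrix (Fin 3) (Fin 3) ℝ) (k : Fin 3) (v : Fin 3 → V) :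
    Fin 3 → V :=
  fun j =>
    if j = k then -v k
    else if 0 < B j k then v j - f (v j) (v k) • v k
    else v j

/-- A realization of `B` by `π`-rotations: a triple of vectors in `ℝ^{2,1}` of square
norm `-2` with pairwise inner products `-|b₁₂|, -|b₂₃|, -|b₃₁|`. -/
def RotRealization (B : Matrix (Fin 3) (Fin 3) ℝ) (v : Fin 3 → (Fin 3 → ℝ)) : Prop :=
  (∀ i, lform (v i) (v i) = -2) ∧
  lform (v 0) (v 1) = -|B 0 1| ∧ lform (v 1) (v 2) = -|B 1 2| ∧
  lform (v 2) (v 0) = -|B 2 0|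

/-- Mutation of a triple of points by partial `π`-rotations. -/
def mutateVecRot (B : Matrix (Fin 3) (Fin 3) ℝ) (k : Fin 3) (v : Fin 3 → (Fin 3 → ℝ)) :
    Fin 3 → (Fin 3 → ℝ) :=
  fun j => if 0 < B j k then -v j - lform (v j) (v k) • v k else v j

/-!
The Lorentzian Gram matrix of three vectors `v` has determinant `-det(v)² ≤ 0`. With diagonal
`-2` and off-diagonal entries `-a, -b, -c` this is the Markov inequality
`a² + b² + c² ≤ abc + 4`. Mutation at `k` changes the sign of the two weights at `k` and sends
the opposite weight `c` to `c - ab`; since `ab - c` is the other root of the Markov quadratic in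
`c` (Vieta jumping), it is again at least `2` when `a, b ≥ 2`, so `μ_k(B)` is cyclic with the
opposite orientation. On the vector side `x ↦ -x - ⟨x, v_k⟩ v_k` is the half-turn about `v_k`,
an isometry fixing `v_k`; it moves only the vector `v_j` with `b_jk > 0`, and then
`⟨v_i, v'_j⟩ = b_ij - b_jk b_ki = b'_ij`.
-/

lemma lform_comm (x y : Fin 3 → ℝ) : lform x y = lform y x := by
  unfold lform; ring

def halfTurn (y x : Fin 3 → ℝ) : Fin 3 → ℝ := -x - lform x y • y

lemma lform_halfTurn_left (y x z : Fin 3 → ℝ) :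
    lform (halfTurn y x) z = -lform x z - lform x y * lform y z := by
  simp only [halfTurn, lform, Pi.sub_apply, Pi.neg_apply, Pi.smul_apply, smul_eq_mul]
  ring

lemma lform_halfTurn_axis {y : Fin 3 → ℝ} (hy : lform y y = -2) (x : Fin 3 → ℝ) :
    lform (halfTurn y x) y = lform x y := by
  rw [lform_halfTurn_left, hy]; ring

lemma lform_halfTurn_halfTurn {y : Fin 3 → ℝ} (hy : lform y y = -2) (x z : Fin 3 → ℝ) :
    lform (halfTurn y x) (halfTurn y z) = lform x z := by
  rw [lform_halfTurn_left, lform_comm x, lform_halfTurn_left, lform_comm y (halfTurn y z),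
    lform_halfTurn_axis hy, lform_comm z x, lform_comm y x]
  ring

lemma det_lform_gram (v : Fin 3 → Fin 3 → ℝ) :
    (of fun i j => lform (v i) (v j)).det = -(of v).det ^ 2 := by
  have hgram : (of fun i j => lform (v i) (v j)) = of v * diagonal ![1, 1, -1] * (of v)ᵀ := by
    ext i j
    simp [mul_apply, Fin.sum_univ_three, lform]
    ring
  rw [hgram, det_mul, det_mul, det_transpose, det_diagonal]
  simp [Fin.prod_univ_three]
  ring

lemma lform_markov_le {u v w : Fin 3 → ℝ} (hu : lform u u = -2) (hv : lform v v = -2)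
    (hw : lform w w = -2) :
    lform u v ^ 2 + lform v w ^ 2 + lform w u ^ 2 + lform u v * lform v w * lform w u ≤ 4 := by
  have hdet := det_lform_gram ![u, v, w]
  rw [det_fin_three] at hdet
  simp only [of_apply, cons_val_zero, cons_val_one, cons_val_two, tail_cons, head_cons] at hdet
  rw [hu, hv, hw, lform_comm v u, lform_comm w v, lform_comm u w] at hdet
  nlinarith [sq_nonneg (of ![u, v, w]).det]

lemma two_le_mul_sub_of_markov_le {a b c : ℝ} (ha : 2 ≤ a) (hb : 2 ≤ b)
    (h : a ^ 2 + b ^ 2 + c ^ 2 ≤ a * b * c + 4) : 2 ≤ a * b - c := by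
  nlinarith [sq_nonneg (a - b), sq_nonneg (c - 2), mul_nonneg (sub_nonneg.2 ha) (sub_nonneg.2 hb),
    sq_nonneg (a + b - c)]

lemma forall_ne_of_cycle_fin_three {P : Fin 3 → Fin 3 → Prop} (hP : ∀ p q, P p q → P q p)
    {k i j : Fin 3} (hki : k ≠ i) (hij : i ≠ j) (hjk : j ≠ k) (h₁ : P k i) (h₂ : P i j)
    (h₃ : P j k) {p q : Fin 3} (hpq : p ≠ q) : P p q := by
  have : (p = k ∧ q = i ∨ p = i ∧ q = j ∨ p = j ∧ q = k) ∨
      (q = k ∧ p = i ∨ q = i ∧ p = j ∨ q = j ∧ p = k) := by omega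
  rcases this with (⟨rfl, rfl⟩ | ⟨rfl, rfl⟩ | ⟨rfl, rfl⟩) | (⟨rfl, rfl⟩ | ⟨rfl, rfl⟩ | ⟨rfl, rfl⟩)
  all_goals first | assumption | exact hP _ _ ‹_›

section Mutation

variable {B : Matrix (Fin 3) (Fin 3) ℝ} {v : Fin 3 → Fin 3 → ℝ} {k i j : Fin 3}

lemma apply_eq_neg_of_transpose_eq_neg (hB : Bᵀ = -B) (i j : Fin 3) : B i j = -B j i := by
  simpa using congrFun (congrFun hB j) i

lemma abs_apply_comm_of_transpose_eq_neg (hB : Bᵀ = -B) (i j : Fin 3) : |B i j| = |B j i| := by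
  rw [apply_eq_neg_of_transpose_eq_neg hB i j, abs_neg]

lemma ne_of_apply_pos (hB : Bᵀ = -B) (h : 0 < B i j) : i ≠ j := by
  rintro rfl
  linarith [apply_eq_neg_of_transpose_eq_neg hB i i]

lemma mutate_transpose (hB : Bᵀ = -B) (k : Fin 3) : (mutate k B)ᵀ = -mutate k B := by
  ext i j
  have hskew := apply_eq_neg_of_transpose_eq_neg hB
  rw [transpose_apply, neg_apply]
  simp only [mutate, of_apply, or_comm (a := j = k)]
  split_ifs
  · rw [hskew]
  · rw [hskew i j, hskew k i, hskew j k, abs_neg, abs_neg]; ring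

lemma mutate_apply_left (k j : Fin 3) : mutate k B k j = -B k j := by
  simp [mutate]

lemma mutate_apply_right (i k : Fin 3) : mutate k B i k = -B i k := by
  simp [mutate]

lemma mutate_apply_of_cycle (hB : Bᵀ = -B) (hki : k ≠ i) (hjk : j ≠ k) (h₁ : 0 < B k i)
    (h₃ : 0 < B j k) : mutate k B i j = B i j - B j k * B k i := by
  have hskew := apply_eq_neg_of_transpose_eq_neg hB
  simp only [mutate, of_apply, hki.symm, hjk, or_self, if_false]
  rw [hskew i k, hskew k j, abs_neg, abs_neg, abs_of_pos h₁, abs_of_pos h₃]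
  ring

lemma mutateVecRot_of_pos (h : 0 < B j k) : mutateVecRot B k v j = halfTurn (v k) (v j) :=
  if_pos h

lemma mutateVecRot_of_nonpos (h : B j k ≤ 0) : mutateVecRot B k v j = v j :=
  if_neg h.not_gt

lemma lform_mutateVecRot_self (hv₁ : ∀ p, lform (v p) (v p) = -2) (p : Fin 3) :
    lform (mutateVecRot B k v p) (mutateVecRot B k v p) = -2 := by
  rcases lt_or_ge 0 (B p k) with h | h
  · rw [mutateVecRot_of_pos h, lform_halfTurn_halfTurn (hv₁ k), hv₁]
  · rw [mutateVecRot_of_nonpos h, hv₁]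

lemma mutate_apply_le_neg_two_of_cycle (hB : Bᵀ = -B) (hv₁ : ∀ p, lform (v p) (v p) = -2)
    (hv : ∀ p q, p ≠ q → lform (v p) (v q) = -|B p q|)
    (h₁ : 2 ≤ B k i) (h₂ : 0 < B i j) (h₃ : 2 ≤ B j k) : mutate k B i j ≤ -2 := by
  have h₁' : 0 < B k i := by linarith
  have h₃' : 0 < B j k := by linarith
  have hmarkov := lform_markov_le (hv₁ k) (hv₁ i) (hv₁ j)
  rw [hv k i (ne_of_apply_pos hB h₁'), hv i j (ne_of_apply_pos hB h₂),
    hv j k (ne_of_apply_pos hB h₃'), abs_of_pos h₁', abs_of_pos h₂, abs_of_pos h₃'] at hmarkov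
  have hvieta := two_le_mul_sub_of_markov_le h₃ h₁ (c := B i j) (by nlinarith)
  rw [mutate_apply_of_cycle hB (ne_of_apply_pos hB h₁') (ne_of_apply_pos hB h₃') h₁' h₃']
  linarith

lemma mul_mutate_neg_and_two_le_abs (hB : Bᵀ = -B) (hv₁ : ∀ p, lform (v p) (v p) = -2)
    (hv : ∀ p q, p ≠ q → lform (v p) (v q) = -|B p q|)
    (h₁ : 2 ≤ B k i) (h₂ : 0 < B i j) (h₃ : 2 ≤ B j k) {p q : Fin 3} (hpq : p ≠ q) :
    B p q * mutate k B p q < 0 ∧ 2 ≤ |mutate k B p q| := by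
  have hskew := apply_eq_neg_of_transpose_eq_neg hB
  have hskew' := apply_eq_neg_of_transpose_eq_neg (mutate_transpose hB k)
  have hmij := mutate_apply_le_neg_two_of_cycle hB hv₁ hv h₁ h₂ h₃
  refine forall_ne_of_cycle_fin_three
    (P := fun p q => B p q * mutate k B p q < 0 ∧ 2 ≤ |mutate k B p q|) ?_
    (ne_of_apply_pos hB (by linarith)) (ne_of_apply_pos hB h₂) (ne_of_apply_pos hB (by linarith))
    ?_ ?_ ?_ hpq
  · intro p q ⟨hneg, habs⟩
    rw [hskew q p, hskew' q p, abs_neg]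
    exact ⟨by linarith, habs⟩
  · rw [mutate_apply_left, abs_neg, abs_of_pos (by linarith)]
    exact ⟨by nlinarith, h₁⟩
  · rw [abs_of_neg (by linarith)]
    exact ⟨mul_neg_of_pos_of_neg h₂ (by linarith), by linarith⟩
  · rw [mutate_apply_right, abs_neg, abs_of_pos (by linarith)]
    exact ⟨by nlinarith, h₃⟩

lemma lform_mutateVecRot_of_cycle (hB : Bᵀ = -B) (hv₁ : ∀ p, lform (v p) (v p) = -2)
    (hv : ∀ p q, p ≠ q → lform (v p) (v q) = -|B p q|)
    (h₁ : 2 ≤ B k i) (h₂ : 0 < B i j) (h₃ : 2 ≤ B j k) {p q : Fin 3} (hpq : p ≠ q) :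
    lform (mutateVecRot B k v p) (mutateVecRot B k v q) = -|mutate k B p q| := by
  have hskew := apply_eq_neg_of_transpose_eq_neg hB
  have hki := ne_of_apply_pos hB (by linarith : 0 < B k i)
  have hij := ne_of_apply_pos hB h₂
  have hjk := ne_of_apply_pos hB (by linarith : 0 < B j k)
  have hvk : mutateVecRot B k v k = v k := mutateVecRot_of_nonpos (by linarith [hskew k k])
  have hvi : mutateVecRot B k v i = v i := mutateVecRot_of_nonpos (by linarith [hskew i k])
  have hvj : mutateVecRot B k v j = halfTurn (v k) (v j) := mutateVecRot_of_pos (by linarith)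
  have hmij := mutate_apply_le_neg_two_of_cycle hB hv₁ hv h₁ h₂ h₃
  refine forall_ne_of_cycle_fin_three
    (P := fun p q => lform (mutateVecRot B k v p) (mutateVecRot B k v q) = -|mutate k B p q|)
    ?_ hki hij hjk ?_ ?_ ?_ hpq
  · intro p q h
    rw [lform_comm, h, abs_apply_comm_of_transpose_eq_neg (mutate_transpose hB k)]
  · rw [hvk, hvi, hv k i hki, mutate_apply_left, abs_neg]
  · rw [hvi, hvj, lform_comm, lform_halfTurn_left, lform_comm (v k), hv j i hij.symm,
      hv j k hjk, hv i k hki.symm, abs_apply_comm_of_transpose_eq_neg hB j i,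
      abs_apply_comm_of_transpose_eq_neg hB i k, abs_of_neg (hmij.trans_lt (by norm_num)),
      mutate_apply_of_cycle hB hki hjk (by linarith) (by linarith), abs_of_pos h₂,
      abs_of_pos (by linarith : 0 < B j k), abs_of_pos (by linarith : 0 < B k i)]
    ring
  · rw [hvj, hvk, lform_halfTurn_axis (hv₁ k), hv j k hjk, mutate_apply_right, abs_neg]

end Mutation

theorem mutation_preserves_rot_realization_general
    (B : Matrix (Fin 3) (Fin 3) ℝ) (hB : Bᵀ = -B)
    (h2 : 2 ≤ B 0 1 ∧ 2 ≤ B 1 2 ∧ 2 ≤ B 2 0)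
    (v : Fin 3 → (Fin 3 → ℝ))
    (hv1 : ∀ i, lform (v i) (v i) = -2)
    (hv2 : ∀ i j : Fin 3, i < j → lform (v i) (v j) = -|B i j|)
    (k : Fin 3) :
    (IsCyclicMat (mutate k B) ∧
      2 ≤ |mutate k B 0 1| ∧ 2 ≤ |mutate k B 1 2| ∧ 2 ≤ |mutate k B 2 0|) ∧
    (∀ i, lform (mutateVecRot B k v i) (mutateVecRot B k v i) = -2) ∧
    (∀ i j : Fin 3, i < j →
      lform (mutateVecRot B k v i) (mutateVecRot B k v j) = -|mutate k B i j|) := by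
  obtain ⟨h01, h12, h20⟩ := h2
  have hv : ∀ p q, p ≠ q → lform (v p) (v q) = -|B p q| := by
    intro p q hpq
    rcases hpq.lt_or_gt with h | h
    · exact hv2 p q h
    · rw [lform_comm, hv2 q p h, abs_apply_comm_of_transpose_eq_neg hB]
  obtain ⟨i, j, h₁, h₂, h₃⟩ : ∃ i j, 2 ≤ B k i ∧ 2 ≤ B i j ∧ 2 ≤ B j k := by
    fin_cases k
    exacts [⟨1, 2, h01, h12, h20⟩, ⟨2, 0, h12, h20, h01⟩, ⟨0, 1, h20, h01, h12⟩]
  have hB' {p q : Fin 3} (hpq : p ≠ q) :=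
    mul_mutate_neg_and_two_le_abs hB hv1 hv h₁ (by linarith) h₃ hpq
  have hneg {p q : Fin 3} (hpq : p ≠ q) (h : 2 ≤ B p q) : mutate k B p q < 0 :=
    neg_of_mul_neg_right (hB' hpq).1 (by linarith)
  exact ⟨⟨Or.inr ⟨hneg (by decide) h01, hneg (by decide) h12, hneg (by decide) h20⟩,
    (hB' (by decide)).2, (hB' (by decide)).2, (hB' (by decide)).2⟩,
    lform_mutateVecRot_self hv1,
    fun p q hpq => lform_mutateVecRot_of_cycle hB hv1 hv h₁ (by linarith) h₃ hpq.ne⟩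

/-- Mutation of a realization by π-rotations of a cyclic matrix with
all weights at least 2 is again such a realization of the mutated matrix. -/
theorem mutation_preserves_rot_realization
    (B : Matrix (Fin 3) (Fin 3) ℝ) (hB : Bᵀ = -B)
    (hpos : 0 < B 0 1 ∧ 0 < B 1 2 ∧ 0 < B 2 0)
    (h2 : 2 ≤ B 0 1 ∧ 2 ≤ B 1 2 ∧ 2 ≤ B 2 0)
    (v : Fin 3 → (Fin 3 → ℝ))
    (hv1 : ∀ i, lform (v i) (v i) = -2)
    (hv2 : ∀ i j : Fin 3, i < j → lform (v i) (v j) = -|B i j|)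
    (k : Fin 3) :
    (IsCyclicMat (mutate k B) ∧
      2 ≤ |mutate k B 0 1| ∧ 2 ≤ |mutate k B 1 2| ∧ 2 ≤ |mutate k B 2 0|) ∧
    (∀ i, lform (mutateVecRot B k v i) (mutateVecRot B k v i) = -2) ∧
    (∀ i j : Fin 3, i < j →
      lform (mutateVecRot B k v i) (mutateVecRot B k v j) = -|mutate k B i j|) :=
  mutation_preserves_rot_realization_general B hB h2 v hv1 hv2 k
end
end

section
/- Let B be a cyclic real skew-symmetric 3×3 matrix with weights p = |b_12|, q = |b_23|, r = |b_31| satisfying r = 2 and p = q ≥ 2. Then B is mutation-cyclic (every matrix in its mutation class is cyclic), and moreover B is minimal in its mutation class: every matrix B' mutation-equivalent to B satisfies |b'_12| + |b'_23| + |b'_31| ≥ p + q + 2. -/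
open Matrix
noncomputable section

/-! Write `p = q = 2 cosh t`. For a cyclic `B` with weights `x, y, z`, mutation at a vertex
reverses all arrows and replaces the weight of the opposite edge, say `z`, by `x y - z`. Triples
`(2 cosh (a t), 2 cosh (b t), 2 cosh (c t))` with integers `a + b + c = 0` are closed under these
Vieta moves, because `2 cosh u · 2 cosh v = 2 cosh (u + v) + 2 cosh (u - v)`; their entries are at
least `2`, so the mutated matrix is again cyclic. The initial weights `(p, p, 2)` have exponents
`(1, -1, 0)`, and since at most one exponent of a nonzero such triple vanishes, the weight sum
never drops below `2 p + 2`. -/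

open Real

def IsCoshTriple (t x y z : ℝ) : Prop :=
  ∃ a b c : ℤ, a + b + c = 0 ∧ ¬(a = 0 ∧ b = 0 ∧ c = 0) ∧
    x = 2 * cosh (a * t) ∧ y = 2 * cosh (b * t) ∧ z = 2 * cosh (c * t)

lemma two_mul_cosh_mul_two_mul_cosh (u v : ℝ) :
    2 * cosh u * (2 * cosh v) = 2 * cosh (u + v) + 2 * cosh (u - v) := by
  rw [cosh_add, cosh_sub]; ring

lemma cosh_le_cosh_intCast_mul {n : ℤ} (hn : n ≠ 0) (t : ℝ) : cosh t ≤ cosh (n * t) := by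
  rw [cosh_le_cosh, abs_mul]
  exact le_mul_of_one_le_left (abs_nonneg t) (by exact_mod_cast Int.one_le_abs hn)

namespace IsCoshTriple

variable {t x y z : ℝ}

lemma swap (h : IsCoshTriple t x y z) : IsCoshTriple t y x z := by
  obtain ⟨a, b, c, hsum, hne, rfl, rfl, rfl⟩ := h
  exact ⟨b, a, c, by omega, by tauto, rfl, rfl, rfl⟩

lemma rotate (h : IsCoshTriple t x y z) : IsCoshTriple t y z x := by
  obtain ⟨a, b, c, hsum, hne, rfl, rfl, rfl⟩ := h
  exact ⟨b, c, a, by omega, by tauto, rfl, rfl, rfl⟩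

lemma two_le_left (h : IsCoshTriple t x y z) : 2 ≤ x := by
  obtain ⟨a, -, -, -, -, rfl, -, -⟩ := h
  linarith [one_le_cosh (a * t)]

lemma pos (h : IsCoshTriple t x y z) : 0 < x ∧ 0 < y ∧ 0 < z :=
  ⟨by linarith [h.two_le_left], by linarith [h.rotate.two_le_left],
    by linarith [h.rotate.rotate.two_le_left]⟩

lemma vieta (h : IsCoshTriple t x y z) : IsCoshTriple t x y (x * y - z) := by
  obtain ⟨a, b, c, hsum, hne, rfl, rfl, rfl⟩ := h
  have hc : (c : ℝ) * t = -(a * t + b * t) := by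
    rw [show c = -(a + b) by omega]; push_cast; ring
  refine ⟨a, -b, b - a, by omega, by omega, rfl, by simp, ?_⟩
  rw [two_mul_cosh_mul_two_mul_cosh, hc, cosh_neg,
    show ((b - a : ℤ) : ℝ) * t = -(a * t - b * t) by push_cast; ring, cosh_neg]
  ring

lemma four_mul_cosh_add_two_le (h : IsCoshTriple t x y z) : 4 * cosh t + 2 ≤ x + y + z := by
  obtain ⟨a, b, c, hsum, hne, rfl, rfl, rfl⟩ := h
  have le_of_ne (n : ℤ) (hn : n ≠ 0) := cosh_le_cosh_intCast_mul hn t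
  by_cases ha : a = 0
  · linarith [one_le_cosh (a * t), le_of_ne b (by omega), le_of_ne c (by omega)]
  by_cases hb : b = 0
  · linarith [one_le_cosh (b * t), le_of_ne a ha, le_of_ne c (by omega)]
  · linarith [one_le_cosh (c * t), le_of_ne a ha, le_of_ne b hb]

end IsCoshTriple

def skew3 (x y z : ℝ) : Matrix (Fin 3) (Fin 3) ℝ := !![0, x, -z; -x, 0, y; z, -y, 0]

lemma eq_skew3_of_transpose_eq_neg {B : Matrix (Fin 3) (Fin 3) ℝ} (hB : Bᵀ = -B) :
    B = skew3 (B 0 1) (B 1 2) (B 2 0) := by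
  have h i j : B j i = -B i j := by simpa using congrFun (congrFun hB i) j
  have d i : B i i = 0 := by linarith [h i i]
  ext i j
  fin_cases i <;> fin_cases j <;> simp [skew3, d, h 0 1, h 1 2, h 2 0]

lemma neg_skew3 (x y z : ℝ) : -skew3 x y z = skew3 (-x) (-y) (-z) := by
  ext i j
  fin_cases i <;> fin_cases j <;> simp [skew3]

lemma mutate_neg (k : Fin 3) (B : Matrix (Fin 3) (Fin 3) ℝ) :
    mutate k (-B) = -mutate k B := by
  ext i j
  simp only [mutate, Matrix.of_apply, Matrix.neg_apply, abs_neg]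
  split_ifs <;> ring

lemma of_perm_neg (σ : Equiv.Perm (Fin 3)) (B : Matrix (Fin 3) (Fin 3) ℝ) :
    (Matrix.of fun i j => (-B) (σ i) (σ j)) = -Matrix.of fun i j => B (σ i) (σ j) := by
  ext i j
  simp

section mutate_skew3

variable {x y z : ℝ}

lemma mutate_zero_skew3 (hx : 0 < x) (hz : 0 < z) :
    mutate 0 (skew3 x y z) = -skew3 x (z * x - y) z := by
  ext i j
  fin_cases i <;> fin_cases j <;> simp [mutate, skew3, abs_of_pos hx, abs_of_pos hz] <;> ring

lemma mutate_one_skew3 (hx : 0 < x) (hy : 0 < y) :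
    mutate 1 (skew3 x y z) = -skew3 x y (x * y - z) := by
  ext i j
  fin_cases i <;> fin_cases j <;> simp [mutate, skew3, abs_of_pos hx, abs_of_pos hy] <;> ring

lemma mutate_two_skew3 (hy : 0 < y) (hz : 0 < z) :
    mutate 2 (skew3 x y z) = -skew3 (y * z - x) y z := by
  ext i j
  fin_cases i <;> fin_cases j <;> simp [mutate, skew3, abs_of_pos hy, abs_of_pos hz] <;> ring

end mutate_skew3

lemma Equiv.Perm.fin_three_cases (σ : Equiv.Perm (Fin 3)) :
    σ = 1 ∨ σ = Equiv.swap 0 1 * Equiv.swap 1 2 ∨ σ = Equiv.swap 1 2 * Equiv.swap 0 1 ∨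
      σ = Equiv.swap 0 1 ∨ σ = Equiv.swap 0 2 ∨ σ = Equiv.swap 1 2 := by
  revert σ; decide

def IsCoshQuiver (t : ℝ) (B : Matrix (Fin 3) (Fin 3) ℝ) : Prop :=
  ∃ x y z, IsCoshTriple t x y z ∧ (B = skew3 x y z ∨ B = -skew3 x y z)

namespace IsCoshQuiver

variable {t : ℝ} {B : Matrix (Fin 3) (Fin 3) ℝ}

lemma neg (h : IsCoshQuiver t B) : IsCoshQuiver t (-B) := by
  obtain ⟨x, y, z, hxyz, rfl | rfl⟩ := h
  · exact ⟨x, y, z, hxyz, .inr rfl⟩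
  · exact ⟨x, y, z, hxyz, .inl (neg_neg _)⟩

lemma mutate_skew3 {x y z : ℝ} (h : IsCoshTriple t x y z) (k : Fin 3) :
    IsCoshQuiver t (mutate k (skew3 x y z)) := by
  obtain ⟨hx, hy, hz⟩ := h.pos
  fin_cases k
  · exact ⟨_, _, _, h.rotate.rotate.vieta.rotate, .inr (mutate_zero_skew3 hx hz)⟩
  · exact ⟨_, _, _, h.vieta, .inr (mutate_one_skew3 hx hy)⟩
  · exact ⟨_, _, _, h.rotate.vieta.rotate.rotate, .inr (mutate_two_skew3 hy hz)⟩

lemma mutate (h : IsCoshQuiver t B) (k : Fin 3) : IsCoshQuiver t (mutate k B) := by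
  obtain ⟨x, y, z, hxyz, rfl | rfl⟩ := h
  · exact mutate_skew3 hxyz k
  · rw [mutate_neg]
    exact (mutate_skew3 hxyz k).neg

lemma perm_skew3 {x y z : ℝ} (h : IsCoshTriple t x y z) (σ : Equiv.Perm (Fin 3)) :
    IsCoshQuiver t (Matrix.of fun i j => skew3 x y z (σ i) (σ j)) := by
  rcases σ.fin_three_cases with rfl | rfl | rfl | rfl | rfl | rfl <;>
    [refine ⟨x, y, z, h, .inl ?_⟩; refine ⟨y, z, x, h.rotate, .inl ?_⟩;
      refine ⟨z, x, y, h.rotate.rotate, .inl ?_⟩; refine ⟨x, z, y, h.swap.rotate, .inr ?_⟩;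
      refine ⟨y, x, z, h.swap, .inr ?_⟩; refine ⟨z, y, x, h.rotate.swap, .inr ?_⟩] <;>
  · ext i j
    fin_cases i <;> fin_cases j <;> simp [skew3, Equiv.swap_apply_of_ne_of_ne]

lemma perm (h : IsCoshQuiver t B) (σ : Equiv.Perm (Fin 3)) :
    IsCoshQuiver t (Matrix.of fun i j => B (σ i) (σ j)) := by
  obtain ⟨x, y, z, hxyz, rfl | rfl⟩ := h
  · exact perm_skew3 hxyz σ
  · rw [of_perm_neg]
    exact (perm_skew3 hxyz σ).neg

lemma of_mutationEquiv {B' : Matrix (Fin 3) (Fin 3) ℝ} (h : IsCoshQuiver t B)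
    (hBB' : MutationEquiv B B') : IsCoshQuiver t B' := by
  induction hBB' with
  | refl => exact h
  | tail _ hstep ih =>
    rcases hstep with ⟨k, rfl⟩ | ⟨σ, rfl⟩
    exacts [ih.mutate k, ih.perm σ]

lemma isCyclicMat (h : IsCoshQuiver t B) : IsCyclicMat B := by
  obtain ⟨x, y, z, hxyz, rfl | rfl⟩ := h <;> obtain ⟨hx, hy, hz⟩ := hxyz.pos
  · exact .inl (by simp [skew3, hx, hy, hz])
  · exact .inr (by simp [skew3, hx, hy, hz])

lemma four_mul_cosh_add_two_le (h : IsCoshQuiver t B) :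
    4 * cosh t + 2 ≤ |B 0 1| + |B 1 2| + |B 2 0| := by
  obtain ⟨x, y, z, hxyz, rfl | rfl⟩ := h <;> obtain ⟨hx, hy, hz⟩ := hxyz.pos <;>
    simpa [skew3, abs_of_pos, hx, hy, hz] using hxyz.four_mul_cosh_add_two_le

end IsCoshQuiver

lemma isCoshQuiver_of_isCyclicMat {t : ℝ} {B : Matrix (Fin 3) (Fin 3) ℝ} (hB : Bᵀ = -B)
    (hcyc : IsCyclicMat B) (h : IsCoshTriple t |B 0 1| |B 1 2| |B 2 0|) : IsCoshQuiver t B := by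
  refine ⟨_, _, _, h, ?_⟩
  have hskew := eq_skew3_of_transpose_eq_neg hB
  rcases hcyc with ⟨h01, h12, h20⟩ | ⟨h01, h12, h20⟩
  · left
    rwa [abs_of_pos h01, abs_of_pos h12, abs_of_pos h20]
  · right
    rwa [abs_of_neg h01, abs_of_neg h12, abs_of_neg h20, neg_skew3, neg_neg, neg_neg, neg_neg]

/-- a cyclic matrix with weights `p = q ≥ 2` and `r = 2` is
mutation-cyclic and minimal in its mutation class. -/
theorem mutation_cyclic_and_minimal_of_qq2
    (B : Matrix (Fin 3) (Fin 3) ℝ) (hB : Bᵀ = -B) (hcyc : IsCyclicMat B)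
    (hr2 : |B 2 0| = 2) (hpq : |B 0 1| = |B 1 2|) (h2 : 2 ≤ |B 0 1|) :
    IsMutationCyclic B ∧
    ∀ B', MutationEquiv B B' →
      |B 0 1| + |B 1 2| + 2 ≤ |B' 0 1| + |B' 1 2| + |B' 2 0| := by
  set t := arcosh (|B 0 1| / 2)
  have ht : 2 * cosh t = |B 0 1| := by
    rw [cosh_arcosh (by linarith)]; ring
  have hinit : IsCoshTriple t |B 0 1| |B 1 2| |B 2 0| :=
    ⟨1, -1, 0, by norm_num, by norm_num, by simp [ht], by simp [ht, hpq], by simp [hr2]⟩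
  have hclass B' (h : MutationEquiv B B') : IsCoshQuiver t B' :=
    (isCoshQuiver_of_isCyclicMat hB hcyc hinit).of_mutationEquiv h
  refine ⟨fun B' h => (hclass B' h).isCyclicMat, fun B' h => ?_⟩
  linarith [(hclass B' h).four_mul_cosh_add_two_le]
end
end
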